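/- Let Ω ⊂ ℝ^d be a bounded open set with an equal-volume partition (ω_i)_{1≤i≤N} of mesh h_N, let ε, τ, T > 0 with τ² ≤ ε²/2, and let (M^n, V^n)_{n≥0} in M_N be generated by the symplectic Euler scheme with d_S(M⁰) ≤ h_N. Define H^n = ½‖V^n‖²_M + d_S(M^n)²/(2ε²). Then for every integer n with 0 ≤ nτ ≤ T, H^n ≤ e^{2Tτ/ε²} (½‖V⁰‖²_M + h_N²/(2ε²)). -/

import Mathlib

open MeasureTheory
open scoped RealInnerProductSpace

noncomputable section

/-- The set `S ⊆ L²(Ω, ℝ^d)` of measure-preserving maps: those `s` with `s_#Leb = Leb`,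
where `Leb` is the restriction of the Lebesgue measure to `Ω`. -/
def MPmaps {d : ℕ} (Ω : Set (EuclideanSpace ℝ (Fin d))) :
    Set (Lp (EuclideanSpace ℝ (Fin d)) 2 (volume.restrict Ω)) :=
  {s | Measure.map s (volume.restrict Ω) = volume.restrict Ω}

/-- The linear subspace `M_N ⊆ L²(Ω, ℝ^d)` of maps that are (a.e.) constant on each cell
`ω_i` of the partition. -/
def PiecewiseConst {d N : ℕ} (Ω : Set (EuclideanSpace ℝ (Fin d)))
    (ω : Fin N → Set (EuclideanSpace ℝ (Fin d))) :
    Set (Lp (EuclideanSpace ℝ (Fin d)) 2 (volume.restrict Ω)) :=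
  {f | ∀ i, ∃ c : EuclideanSpace ℝ (Fin d),
    ∀ᵐ x ∂((volume.restrict Ω).restrict (ω i)), f x = c}

/-!
Setting `c = τ/ε²` and `w = Mⁿ - P(sⁿ)`, the velocity update gives
`ε²‖Vⁿ⁺¹‖² = ε²‖Vⁿ‖² - 2τ⟪w, Vⁿ⟫ + τc‖w‖²`, while testing the position update against the
old projection `sⁿ` gives `d_S(Mⁿ⁺¹)² ≤ d_S(Mⁿ)² + 2τ⟪w, Vⁿ⁺¹⟫ + τ²‖Vⁿ⁺¹‖²`; here `sⁿ` may be
replaced by `P(sⁿ)` because `Vⁿ⁺¹ ∈ M_N` is orthogonal to `sⁿ - P(sⁿ)`. Adding up, the cross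
terms cancel and `Hⁿ⁺¹ ≤ Hⁿ + (τ²/ε²) Hⁿ⁺¹`, so `Hⁿ⁺¹ ≤ (1 + 2τ²/ε²) Hⁿ` as long as
`τ²/ε² ≤ 1/2`. Iterating and using `1 + x ≤ eˣ` gives the bound.
-/

open Metric

section PiecewiseConst

variable {d N : ℕ} (Ω : Set (EuclideanSpace ℝ (Fin d)))
  (ω : Fin N → Set (EuclideanSpace ℝ (Fin d)))

theorem zero_mem_piecewiseConst : 0 ∈ PiecewiseConst Ω ω := fun _ =>
  ⟨0, ae_restrict_of_ae (Lp.coeFn_zero _ _ _)⟩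

theorem add_mem_piecewiseConst {f g : Lp (EuclideanSpace ℝ (Fin d)) 2 (volume.restrict Ω)}
    (hf : f ∈ PiecewiseConst Ω ω) (hg : g ∈ PiecewiseConst Ω ω) :
    f + g ∈ PiecewiseConst Ω ω := by
  intro i
  obtain ⟨a, ha⟩ := hf i
  obtain ⟨b, hb⟩ := hg i
  refine ⟨a + b, ?_⟩
  filter_upwards [ha, hb, ae_restrict_of_ae (Lp.coeFn_add f g)] with x hfx hgx hx
  rw [hx, Pi.add_apply, hfx, hgx]

theorem smul_mem_piecewiseConst (r : ℝ) {f : Lp (EuclideanSpace ℝ (Fin d)) 2 (volume.restrict Ω)}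
    (hf : f ∈ PiecewiseConst Ω ω) : r • f ∈ PiecewiseConst Ω ω := by
  intro i
  obtain ⟨a, ha⟩ := hf i
  refine ⟨r • a, ?_⟩
  filter_upwards [ha, ae_restrict_of_ae (Lp.coeFn_smul r f)] with x hfx hx
  rw [hx, Pi.smul_apply, hfx]

def piecewiseConstSubmodule :
    Submodule ℝ (Lp (EuclideanSpace ℝ (Fin d)) 2 (volume.restrict Ω)) where
  carrier := PiecewiseConst Ω ω
  zero_mem' := zero_mem_piecewiseConst Ω ω
  add_mem' := add_mem_piecewiseConst Ω ω
  smul_mem' := smul_mem_piecewiseConst Ω ω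

end PiecewiseConst

theorem le_one_add_two_mul_of_le_add_mul {a b k : ℝ} (hk₀ : 0 ≤ k) (hk : k ≤ 1 / 2)
    (hb : 0 ≤ b) (h : b ≤ a + k * b) : b ≤ (1 + 2 * k) * a := by
  nlinarith [mul_nonneg (mul_nonneg hk₀ hb) (by linarith : (0 : ℝ) ≤ 1 - 2 * k)]

theorem one_add_pow_le_exp_mul {x : ℝ} (hx : 0 ≤ x) (n : ℕ) : (1 + x) ^ n ≤ Real.exp (n * x) := by
  rw [Real.exp_nat_mul]
  gcongr
  linarith [Real.add_one_le_exp x]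

section SymplecticEuler

variable {E : Type*} [NormedAddCommGroup E]

def discreteHamiltonian (S : Set E) (ε : ℝ) (m v : E) : ℝ :=
  1 / 2 * ‖v‖ ^ 2 + infDist m S ^ 2 / (2 * ε ^ 2)

theorem discreteHamiltonian_nonneg (S : Set E) (ε : ℝ) (m v : E) :
    0 ≤ discreteHamiltonian S ε m v := by
  unfold discreteHamiltonian
  have := infDist_nonneg (x := m) (s := S)
  positivity

theorem half_mul_sq_norm_le_discreteHamiltonian (S : Set E) (ε : ℝ) (m v : E) :
    1 / 2 * ‖v‖ ^ 2 ≤ discreteHamiltonian S ε m v :=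
  le_add_of_nonneg_right (by positivity)

variable [InnerProductSpace ℝ E]

theorem infDist_add_smul_sq_le {S : Set E} {m s : E} (hs : s ∈ S) (hms : ‖m - s‖ = infDist m S)
    (τ : ℝ) (v : E) :
    infDist (m + τ • v) S ^ 2 ≤ infDist m S ^ 2 + 2 * τ * ⟪m - s, v⟫ + τ ^ 2 * ‖v‖ ^ 2 :=
  calc infDist (m + τ • v) S ^ 2 ≤ ‖m - s + τ • v‖ ^ 2 := by
        gcongr
        · exact infDist_nonneg
        · rw [sub_add_eq_add_sub, ← dist_eq_norm]
          exact infDist_le_dist_of_mem hs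
    _ = infDist m S ^ 2 + 2 * τ * ⟪m - s, v⟫ + τ ^ 2 * ‖v‖ ^ 2 := by
        rw [norm_add_sq_real, real_inner_smul_right, norm_smul, mul_pow, Real.norm_eq_abs, sq_abs,
          hms]
        ring

theorem discreteHamiltonian_step_le {S : Set E} {ε : ℝ} (hε : ε ≠ 0) (τ : ℝ) {m v v' s p : E}
    (hs : s ∈ S) (hms : ‖m - s‖ = infDist m S) (hv' : v' = v - (τ / ε ^ 2) • (m - p))
    (horth : ⟪s - p, v'⟫ = 0) :
    discreteHamiltonian S ε (m + τ • v') v'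
      ≤ discreteHamiltonian S ε m v + τ ^ 2 / ε ^ 2 * (1 / 2 * ‖v'‖ ^ 2) := by
  set c := τ / ε ^ 2
  have hτ : τ = c * ε ^ 2 := (div_mul_cancel₀ τ (pow_ne_zero 2 hε)).symm
  have hv'sq : ‖v'‖ ^ 2 = ‖v‖ ^ 2 - 2 * c * ⟪v, m - p⟫ + c ^ 2 * ‖m - p‖ ^ 2 := by
    rw [hv', norm_sub_sq_real, real_inner_smul_right, norm_smul, mul_pow, Real.norm_eq_abs,
      sq_abs]
    ring
  have hcross : ⟪m - s, v'⟫ = ⟪v, m - p⟫ - c * ‖m - p‖ ^ 2 := by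
    rw [show m - s = (m - p) - (s - p) by abel, inner_sub_left, horth, sub_zero, hv',
      inner_sub_right, real_inner_smul_right, real_inner_self_eq_norm_sq, real_inner_comm]
  have hdist := infDist_add_smul_sq_le hs hms τ v'
  rw [hcross] at hdist
  have hscaled : ε ^ 2 * ‖v'‖ ^ 2 + infDist (m + τ • v') S ^ 2
      ≤ ε ^ 2 * ‖v‖ ^ 2 + infDist m S ^ 2 + τ ^ 2 * ‖v'‖ ^ 2 := by
    have hw : 0 ≤ c ^ 2 * ε ^ 2 * ‖m - p‖ ^ 2 := by positivity
    rw [hτ] at hdist ⊢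
    linear_combination hdist + ε ^ 2 * hv'sq + hw
  unfold discreteHamiltonian
  field_simp
  exact div_le_div_of_nonneg_right (by linarith) (by positivity)

theorem discreteHamiltonian_symplecticEuler_le {S : Set E} (K : Submodule ℝ E) {P : E → E}
    (hPmem : ∀ f, P f ∈ K) (hPorth : ∀ f, ∀ g ∈ K, ⟪f - P f, g⟫ = 0)
    {ε τ : ℝ} (hε : ε ≠ 0) (hτε : τ ^ 2 ≤ ε ^ 2 / 2) {M V s : ℕ → E}
    (hM0 : M 0 ∈ K) (hV0 : V 0 ∈ K) (hsS : ∀ n, s n ∈ S)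
    (hsproj : ∀ n, ‖M n - s n‖ = infDist (M n) S)
    (hVrec : ∀ n, V (n + 1) = V n - (τ / ε ^ 2) • (M n - P (s n)))
    (hMrec : ∀ n, M (n + 1) = M n + τ • V (n + 1)) (n : ℕ) :
    discreteHamiltonian S ε (M n) (V n)
      ≤ (1 + 2 * (τ ^ 2 / ε ^ 2)) ^ n * discreteHamiltonian S ε (M 0) (V 0) := by
  have hmem : ∀ n, M n ∈ K ∧ V n ∈ K := by
    intro n
    induction n with
    | zero => exact ⟨hM0, hV0⟩
    | succ n ih =>
      have hV : V (n + 1) ∈ K :=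
        hVrec n ▸ K.sub_mem ih.2 (K.smul_mem _ (K.sub_mem ih.1 (hPmem _)))
      exact ⟨hMrec n ▸ K.add_mem ih.1 (K.smul_mem τ hV), hV⟩
  have hk : τ ^ 2 / ε ^ 2 ≤ 1 / 2 := by
    rw [div_le_iff₀ (by positivity)]
    linarith
  refine le_geom (u := fun n => discreteHamiltonian S ε (M n) (V n)) (by positivity) n fun k _ =>
    le_one_add_two_mul_of_le_add_mul (by positivity) hk (discreteHamiltonian_nonneg ..) ?_
  rw [hMrec k]
  refine (discreteHamiltonian_step_le hε τ (hsS k) (hsproj k) (hVrec k)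
    (hPorth _ _ (hmem (k + 1)).2)).trans ?_
  gcongr
  exact half_mul_sq_norm_le_discreteHamiltonian ..

end SymplecticEuler

theorem stmt7_general {d N : ℕ}
    (Ω : Set (EuclideanSpace ℝ (Fin d)))
    (ω : Fin N → Set (EuclideanSpace ℝ (Fin d)))
    (ε τ h T : ℝ) (hε : 0 < ε) (hτ : 0 < τ) (hτε : τ ^ 2 ≤ ε ^ 2 / 2)
    (M V s : ℕ → Lp (EuclideanSpace ℝ (Fin d)) 2 (volume.restrict Ω))
    (PN : Lp (EuclideanSpace ℝ (Fin d)) 2 (volume.restrict Ω) →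
          Lp (EuclideanSpace ℝ (Fin d)) 2 (volume.restrict Ω))
    (hPNmem : ∀ f, PN f ∈ PiecewiseConst Ω ω)
    (hPNorth : ∀ f, ∀ g ∈ PiecewiseConst Ω ω, ⟪f - PN f, g⟫ = 0)
    (hM0 : M 0 ∈ PiecewiseConst Ω ω) (hV0 : V 0 ∈ PiecewiseConst Ω ω)
    (hsS : ∀ n, s n ∈ MPmaps Ω)
    (hsproj : ∀ n, ‖M n - s n‖ = Metric.infDist (M n) (MPmaps Ω))
    (hd0 : Metric.infDist (M 0) (MPmaps Ω) ≤ h)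
    (hVrec : ∀ n, V (n + 1) = V n - (τ / ε ^ 2) • (M n - PN (s n)))
    (hMrec : ∀ n, M (n + 1) = M n + τ • V (n + 1)) :
    ∀ n : ℕ, (n : ℝ) * τ ≤ T →
      (1 / 2) * ‖V n‖ ^ 2 + Metric.infDist (M n) (MPmaps Ω) ^ 2 / (2 * ε ^ 2)
        ≤ Real.exp (2 * T * τ / ε ^ 2) * ((1 / 2) * ‖V 0‖ ^ 2 + h ^ 2 / (2 * ε ^ 2)) := by
  intro n hn
  have hgrowth : (1 + 2 * (τ ^ 2 / ε ^ 2)) ^ n ≤ Real.exp (2 * T * τ / ε ^ 2) :=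
    calc (1 + 2 * (τ ^ 2 / ε ^ 2)) ^ n ≤ Real.exp (n * (2 * (τ ^ 2 / ε ^ 2))) :=
          one_add_pow_le_exp_mul (by positivity) n
      _ = Real.exp (2 * (n * τ) * τ / ε ^ 2) := by ring_nf
      _ ≤ Real.exp (2 * T * τ / ε ^ 2) := by gcongr
  calc discreteHamiltonian (MPmaps Ω) ε (M n) (V n)
      ≤ (1 + 2 * (τ ^ 2 / ε ^ 2)) ^ n * discreteHamiltonian (MPmaps Ω) ε (M 0) (V 0) :=
        discreteHamiltonian_symplecticEuler_le (piecewiseConstSubmodule Ω ω) hPNmem hPNorth hε.ne'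
          hτε hM0 hV0 hsS hsproj hVrec hMrec n
    _ ≤ Real.exp (2 * T * τ / ε ^ 2) * ((1 / 2) * ‖V 0‖ ^ 2 + h ^ 2 / (2 * ε ^ 2)) := by
        unfold discreteHamiltonian
        gcongr
        exact infDist_nonneg

/-- **Uniform bound on the discrete Hamiltonian for the symplectic Euler scheme.**
With the same setting as the one-step decay lemma, if moreover `τ² ≤ ε²/2` and
`d_S(M⁰) ≤ h_N` (where `h_N` is the mesh of the partition), then for every integer `n`
with `0 ≤ nτ ≤ T`, `Hₙ ≤ exp(2Tτ/ε²) (½‖V⁰‖² + h_N²/(2ε²))`. -/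
theorem stmt7 {d N : ℕ} (hN : 0 < N)
    (Ω : Set (EuclideanSpace ℝ (Fin d))) (hΩo : IsOpen Ω) (hΩb : Bornology.IsBounded Ω)
    (ω : Fin N → Set (EuclideanSpace ℝ (Fin d)))
    (hωmeas : ∀ i, MeasurableSet (ω i))
    (hωsub : ∀ i, ω i ⊆ Ω)
    (hωdisj : Pairwise fun i j => volume (ω i ∩ ω j) = 0)
    (hωcover : volume (Ω \ ⋃ i, ω i) = 0)
    (hωvol : ∀ i, volume (ω i) = volume Ω / N)
    (ε τ h T : ℝ) (hε : 0 < ε) (hτ : 0 < τ) (hT : 0 < T) (hτε : τ ^ 2 ≤ ε ^ 2 / 2)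
    (hh : 0 ≤ h) (hωdiam : ∀ i, Metric.diam (ω i) ≤ h)
    (M V s : ℕ → Lp (EuclideanSpace ℝ (Fin d)) 2 (volume.restrict Ω))
    (PN : Lp (EuclideanSpace ℝ (Fin d)) 2 (volume.restrict Ω) →
          Lp (EuclideanSpace ℝ (Fin d)) 2 (volume.restrict Ω))
    (hPNmem : ∀ f, PN f ∈ PiecewiseConst Ω ω)
    (hPNorth : ∀ f, ∀ g ∈ PiecewiseConst Ω ω, ⟪f - PN f, g⟫ = 0)
    (hM0 : M 0 ∈ PiecewiseConst Ω ω) (hV0 : V 0 ∈ PiecewiseConst Ω ω)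
    (hsS : ∀ n, s n ∈ MPmaps Ω)
    (hsproj : ∀ n, ‖M n - s n‖ = Metric.infDist (M n) (MPmaps Ω))
    (hd0 : Metric.infDist (M 0) (MPmaps Ω) ≤ h)
    (hVrec : ∀ n, V (n + 1) = V n - (τ / ε ^ 2) • (M n - PN (s n)))
    (hMrec : ∀ n, M (n + 1) = M n + τ • V (n + 1)) :
    ∀ n : ℕ, (n : ℝ) * τ ≤ T →
      (1 / 2) * ‖V n‖ ^ 2 + Metric.infDist (M n) (MPmaps Ω) ^ 2 / (2 * ε ^ 2)
        ≤ Real.exp (2 * T * τ / ε ^ 2) * ((1 / 2) * ‖V 0‖ ^ 2 + h ^ 2 / (2 * ε ^ 2)) :=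
  stmt7_general Ω ω ε τ h T hε hτ hτε M V s PN hPNmem hPNorth hM0 hV0 hsS hsproj hd0 hVrec hMrec
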